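/- Let M = (I, O, Q, q_init, δ, λ) be an IGMM in which every state is reachable from q_init by a finite sequence of δ-transitions, and let M'' be an input-complete IGMM over I and O with state set Q'' that is a specialization of M. Then there exists a set S of subsets of Q with |S| ≤ |Q''| such that S covers M, S is closed, and every member of S has nonempty output. -/
import Mathlib


/-- An incompletely specified generalized Mealy machine (IGMM) over input
propositions `I`, output propositions `O`, with state set `Q`.
Input valuations are `I → Bool`, output valuations are `O → Bool`.
`delta` is the partial transition function, `lam` the output function. -/
structure IGMM (I O Q : Type*) where
  init : Q
  delta : Q → (I → Bool) → Option Q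
  lam : Q → (I → Bool) → Set (O → Bool)
  lam_nonempty : ∀ q i, (lam q i).Nonempty
  lam_top : ∀ q i, delta q i = none → lam q i = Set.univ

namespace IGMM

/-- `(ι, o) ⊨ M_q` : either an infinite run, or a finite run ending where `delta`
is undefined. -/
def Sat {I O Q : Type*} (M : IGMM I O Q) (q : Q) (ι : ℕ → I → Bool)
    (o : ℕ → O → Bool) : Prop :=
  (∃ qs : ℕ → Q, qs 0 = q ∧
      ∀ j : ℕ, M.delta (qs j) (ι j) = some (qs (j + 1)) ∧ o j ∈ M.lam (qs j) (ι j)) ∨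
  (∃ (k : ℕ) (qs : ℕ → Q), qs 0 = q ∧
      (∀ j < k, M.delta (qs j) (ι j) = some (qs (j + 1)) ∧ o j ∈ M.lam (qs j) (ι j)) ∧
      M.delta (qs k) (ι k) = none)

/-- The behaviour set `Beh_M(q, ι) = {o | (ι, o) ⊨ M_q}`. -/
def Beh {I O Q : Type*} (M : IGMM I O Q) (q : Q) (ι : ℕ → I → Bool) :
    Set (ℕ → O → Bool) :=
  {o | M.Sat q ι o}

end IGMM

/-- `q' ⊑ q` : the state `q'` of `M'` is a specialization of the state `q` of `M`. -/
def IGMM.Specializes {I O Q' Q : Type*} (M' : IGMM I O Q') (q' : Q')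
    (M : IGMM I O Q) (q : Q) : Prop :=
  ∀ ι : ℕ → I → Bool, M'.Beh q' ι ⊆ M.Beh q ι

/-- `q' ≈ q` : the state `q'` of `M'` is a variation of the state `q` of `M`. -/
def IGMM.IsVariation {I O Q' Q : Type*} (M' : IGMM I O Q') (q' : Q')
    (M : IGMM I O Q) (q : Q) : Prop :=
  ∀ ι : ℕ → I → Bool, (M'.Beh q' ι ∩ M.Beh q ι).Nonempty

namespace IGMM

/-- `Succ(C, i)`: successors of the states of `C` under input `i`. -/
def Succ {I O Q : Type*} (M : IGMM I O Q) (C : Set Q) (i : I → Bool) : Set Q :=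
  {p | ∃ q ∈ C, M.delta q i = some p}

/-- `Out(C, i) = ⋂_{q ∈ C} λ(q, i)`. -/
def Out {I O Q : Type*} (M : IGMM I O Q) (C : Set Q) (i : I → Bool) :
    Set (O → Bool) :=
  ⋂ q ∈ C, M.lam q i

/-- `S` covers `M`: every state belongs to some member of `S`. -/
def Covers {I O Q : Type*} (M : IGMM I O Q) (S : Set (Set Q)) : Prop :=
  ∀ q : Q, ∃ C ∈ S, q ∈ C

/-- `S` is closed: the successors of each member under each input are contained
in some member. -/
def SuccClosed {I O Q : Type*} (M : IGMM I O Q) (S : Set (Set Q)) : Prop :=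
  ∀ C ∈ S, ∀ i : I → Bool, ∃ C' ∈ S, M.Succ C i ⊆ C'

/-- `C` has nonempty output: `Out(C, i) ≠ ∅` for every input `i`. -/
def NonemptyOutput {I O Q : Type*} (M : IGMM I O Q) (C : Set Q) : Prop :=
  ∀ i : I → Bool, (M.Out C i).Nonempty

end IGMM

/-- `q'` is reachable from `q` by a finite sequence of `δ`-transitions. -/
def IGMM.Reaches {I O Q : Type*} (M : IGMM I O Q) : Q → Q → Prop :=
  Relation.ReflTransGen fun a b => ∃ i : I → Bool, M.delta a i = some b

/-- `M` is input-complete: `δ` is a total function. -/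
def IGMM.InputComplete {I O Q : Type*} (M : IGMM I O Q) : Prop :=
  ∀ (q : Q) (i : I → Bool), (M.delta q i).isSome


private def scons {α : Type*} (x : α) (f : ℕ → α) : ℕ → α
  | 0 => x
  | n + 1 => f n

private lemma first_step {I O Q : Type*} (M : IGMM I O Q) {q : Q}
    {ι : ℕ → I → Bool} {o : ℕ → O → Bool}
    (h : M.Sat q ι o) : o 0 ∈ M.lam q (ι 0) := by
  rcases h with ⟨qs, h0, hj⟩ | ⟨k, qs, h0, hj, hk⟩
  · simpa [h0] using (hj 0).2
  · rcases Nat.eq_zero_or_pos k with rfl | hk'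
    · rw [M.lam_top q (ι 0) (h0 ▸ hk)]; trivial
    · simpa [h0] using (hj 0 hk').2

private lemma sat_prepend {I O Q : Type*} (M : IGMM I O Q) {q r : Q} {i0 : I → Bool}
    {o0 : O → Bool} {ι : ℕ → I → Bool} {o : ℕ → O → Bool}
    (hd : M.delta q i0 = some r) (ho : o0 ∈ M.lam q i0)
    (h : M.Sat r ι o) : M.Sat q (scons i0 ι) (scons o0 o) := by
  rcases h with ⟨qs, h0, hj⟩ | ⟨k, qs, h0, hj, hk⟩
  · left
    refine ⟨scons q qs, rfl, ?_⟩
    intro j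
    cases j with
    | zero => simpa [scons, h0] using ⟨hd, ho⟩
    | succ m => simpa [scons] using hj m
  · right
    refine ⟨k + 1, scons q qs, rfl, ?_, ?_⟩
    · intro j hj'
      cases j with
      | zero => simpa [scons, h0] using ⟨hd, ho⟩
      | succ m => simpa [scons] using hj m (by omega)
    · simpa [scons] using hk

private lemma sat_shift {I O Q : Type*} (M : IGMM I O Q) {q r : Q} {i0 : I → Bool}
    {o0 : O → Bool} {ι : ℕ → I → Bool} {o : ℕ → O → Bool}
    (h : M.Sat q (scons i0 ι) (scons o0 o))
    (hd : M.delta q i0 = some r) : M.Sat r ι o := by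
  rcases h with ⟨qs, h0, hj⟩ | ⟨k, qs, h0, hj, hk⟩
  · left
    have h1 : qs 1 = r := by
      have h' := (hj 0).1
      rw [h0] at h'
      simp only [scons] at h'
      rw [hd] at h'
      exact (Option.some_inj.mp h').symm
    refine ⟨fun n => qs (n + 1), h1, ?_⟩
    intro j
    simpa [scons] using hj (j + 1)
  · cases k with
    | zero =>
      rw [h0] at hk
      simp only [scons] at hk
      rw [hd] at hk
      exact absurd hk (by simp)
    | succ m =>
      right
      have h1 : qs 1 = r := by
        have h' := (hj 0 (by omega)).1
        rw [h0] at h'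
        simp only [scons] at h'
        rw [hd] at h'
        exact (Option.some_inj.mp h').symm
      refine ⟨m, fun n => qs (n + 1), h1, ?_, ?_⟩
      · intro j hj'
        simpa [scons] using hj (j + 1) (by omega)
      · simpa [scons] using hk

private lemma exists_sat {I O Q : Type*} (M : IGMM I O Q)
    (hic : M.InputComplete) (q : Q) (ι : ℕ → I → Bool) :
    ∃ o, M.Sat q ι o := by
  classical
  let qs : ℕ → Q := fun n =>
    Nat.rec q (fun n p => (M.delta p (ι n)).get (hic p (ι n))) n
  refine ⟨fun n => (M.lam_nonempty (qs n) (ι n)).choose,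
    Or.inl ⟨qs, rfl, fun j => ⟨?_, ?_⟩⟩⟩
  · exact (Option.some_get (hic (qs j) (ι j))).symm
  · exact (M.lam_nonempty (qs j) (ι j)).choose_spec

private lemma spec_lam {I O Q'' Q : Type*} (M'' : IGMM I O Q'') (M : IGMM I O Q)
    (hic : M''.InputComplete) {q'' : Q''} {q : Q}
    (hs : M''.Specializes q'' M q) (i : I → Bool) :
    M''.lam q'' i ⊆ M.lam q i := by
  intro o0 ho0
  have hd : M''.delta q'' i = some ((M''.delta q'' i).get (hic q'' i)) :=
    (Option.some_get _).symm
  obtain ⟨o', ho'⟩ := exists_sat M'' hic ((M''.delta q'' i).get (hic q'' i))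
    (fun _ _ => false)
  have h1 : M''.Sat q'' (scons i fun _ _ => false) (scons o0 o') :=
    sat_prepend M'' hd ho0 ho'
  have h2 : M.Sat q (scons i fun _ _ => false) (scons o0 o') := hs _ h1
  simpa [scons] using first_step M h2

private lemma spec_step {I O Q'' Q : Type*} (M'' : IGMM I O Q'') (M : IGMM I O Q)
    {q'' r'' : Q''} {q r : Q} (hs : M''.Specializes q'' M q) {i : I → Bool}
    (hd'' : M''.delta q'' i = some r'') (hd : M.delta q i = some r) :
    M''.Specializes r'' M r := by
  intro ι o ho
  obtain ⟨o0, ho0⟩ := M''.lam_nonempty q'' i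
  have h1 := sat_prepend M'' hd'' ho0 ho
  have h2 : M.Sat q (scons i ι) (scons o0 o) := hs _ h1
  exact sat_shift M h2 hd

private lemma exists_spec {I O Q'' Q : Type*} (M'' : IGMM I O Q'') (M : IGMM I O Q)
    (hic : M''.InputComplete)
    (hspec : M''.Specializes M''.init M M.init) {q : Q}
    (h : M.Reaches M.init q) : ∃ q'', M''.Specializes q'' M q := by
  induction h with
  | refl => exact ⟨M''.init, hspec⟩
  | tail hab hbc ih =>
    obtain ⟨p'', hp⟩ := ih
    obtain ⟨i, hi⟩ := hbc
    exact ⟨(M''.delta p'' i).get (hic p'' i),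
      spec_step M'' M hp (Option.some_get _).symm hi⟩

/-- if every state of `M` is reachable from `q_init` and `M''` is
an input-complete IGMM over the same `I` and `O` that is a specialization of
`M`, then there is a set `S` of subsets of `Q` with `|S| ≤ |Q''|` that covers
`M`, is closed, and all of whose members have nonempty output. -/
theorem specialization_yields_class_cover {I O Q : Type*}
    [Fintype I] [Fintype O] [Fintype Q]
    (M : IGMM I O Q)
    (hreach : ∀ q : Q, M.Reaches M.init q)
    (Q'' : Type*) [Fintype Q''] (M'' : IGMM I O Q'')
    (hic : M''.InputComplete)
    (hspec : IGMM.Specializes M'' M''.init M M.init) :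
    ∃ S : Set (Set Q), S.ncard ≤ Fintype.card Q'' ∧
      M.Covers S ∧ M.SuccClosed S ∧ ∀ C ∈ S, M.NonemptyOutput C := by
  classical
  set f : Q'' → Set Q := fun q'' => {q | M''.Specializes q'' M q} with hf
  refine ⟨Set.range f, ?_, ?_, ?_, ?_⟩
  · have h : Set.range f = ↑(Finset.univ.image f) := by simp
    rw [h, Set.ncard_coe_finset]
    exact Finset.card_image_le.trans_eq Finset.card_univ
  · intro q
    obtain ⟨q'', hq⟩ := exists_spec M'' M hic hspec (hreach q)
    exact ⟨f q'', ⟨q'', rfl⟩, hq⟩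
  · rintro C ⟨q'', rfl⟩ i
    refine ⟨f ((M''.delta q'' i).get (hic q'' i)), ⟨_, rfl⟩, ?_⟩
    rintro p ⟨q, hq, hd⟩
    exact spec_step M'' M hq (Option.some_get _).symm hd
  · rintro C ⟨q'', rfl⟩ i
    obtain ⟨o0, ho0⟩ := M''.lam_nonempty q'' i
    exact ⟨o0, Set.mem_iInter₂.mpr fun q hq => spec_lam M'' M hic hq i ho0⟩
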